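/- Let G be a non-abelian finite n-centralizer group of conjugate type (m, 1), where m = p^k for a prime p and k ≥ 1. Then p divides n−2. -/

import Mathlib

/-!
In a group of conjugate type `(m, 1)` all centralizers of noncentral elements have the same
index, so none of them is properly contained in another. Hence for a proper centralizer `C` the
noncentral elements of `C_G(C)` are exactly those whose centralizer is `C`, the sets
`C_G(C) \ Z(G)` partition `G \ Z(G)`, and summing over the `n - 1` proper centralizers gives
`∑ |C_G(C)| = |G| + (n - 2) |Z(G)|`.

Let `p ∣ m` be prime. Every proper centralizer `C(x)` is the centralizer of a noncentral
`p`-element `g`: take the `p`-part of `x` if it is noncentral; otherwise `C(x) = C(w)` for the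
`p'`-part `w`, Sylow's theorem gives a noncentral `p`-element `g` commuting with `w` because
`p ∣ |C(w) : Z(G)|` (this index is the same for all noncentral elements, and `p` divides it at
a noncentral `p`-element), and `C(wg) = C(w) = C(g)` since `w` and `g` are powers of `wg`. As
`g ∈ C_G(C)`, `p |Z(G)|` divides every `|C_G(C)|`, and it divides `|G|` since `p ∣ |G : Z(G)|`.
Hence `p ∣ n - 2`.
-/

/-- The set of element centralizers of a group `G`. -/
def centSet (G : Type*) [Group G] : Set (Subgroup G) :=
  Set.range fun x : G => Subgroup.centralizer {x}

open Subgroup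

namespace Subgroup

variable {G : Type*} [Group G]

theorem mem_of_pow_mem_of_coprime {K : Subgroup G} {g : G} {a b : ℕ} (hab : a.Coprime b)
    (ha : g ^ a ∈ K) (hb : g ^ b ∈ K) : g ∈ K := by
  have hbezout : g = (g ^ a) ^ a.gcdA b * (g ^ b) ^ a.gcdB b := by
    rw [← zpow_natCast, ← zpow_natCast, ← zpow_mul, ← zpow_mul, ← zpow_add,
      ← Nat.gcd_eq_gcd_ab, hab.gcd_eq_one, Nat.cast_one, zpow_one]
  rw [hbezout]
  exact mul_mem (zpow_mem ha _) (zpow_mem hb _)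

theorem prime_dvd_relIndex_of_pow_mem {p j : ℕ} (hp : p.Prime) {K H : Subgroup G} [K.Normal]
    {g : G} (hgH : g ∈ H) (hgK : g ∉ K) (hpow : g ^ p ^ j ∈ K) : p ∣ K.relIndex H := by
  by_contra hdvd
  exact hgK <| mem_of_pow_mem_of_coprime
    ((hp.coprime_iff_not_dvd.mpr hdvd).pow_left j) hpow (K.pow_relIndex_mem hgH)

theorem exists_prime_pow_eq_one_of_prime_dvd_relIndex [Finite G] {p : ℕ} (hp : p.Prime)
    {K H : Subgroup G} (hdvd : p ∣ K.relIndex H) :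
    ∃ g ∈ H, g ∉ K ∧ ∃ j, g ^ p ^ j = 1 := by
  have : Fact p.Prime := ⟨hp⟩
  obtain ⟨P⟩ : Nonempty (Sylow p H) := Sylow.nonempty
  have hPK : ¬(P : Subgroup H) ≤ K.subgroupOf H := fun hle =>
    P.not_dvd_index (hdvd.trans (index_dvd_of_le hle))
  obtain ⟨g, hgP, hgK⟩ := SetLike.not_le_iff_exists.mp hPK
  obtain ⟨j, hj⟩ := P.isPGroup' ⟨g, hgP⟩
  exact ⟨g, g.2, hgK, j, by simpa using congrArg (fun h : P => ((h : H) : G)) hj⟩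

theorem centralizer_le_centralizer_pow (g : G) (n : ℕ) :
    centralizer {g} ≤ centralizer {g ^ n} := fun _ ha =>
  mem_centralizer_singleton_iff.mpr <|
    (show Commute _ g from mem_centralizer_singleton_iff.mp ha).pow_right n

theorem centralizer_singleton_eq_top_iff {g : G} : centralizer {g} = ⊤ ↔ g ∈ center G := by
  rw [centralizer_eq_top_iff_subset, Set.singleton_subset_iff, SetLike.mem_coe]

theorem mem_centralizer_iff_le_centralizer_singleton {H : Subgroup G} {y : G} :
    y ∈ centralizer (H : Set G) ↔ H ≤ centralizer {y} := by
  simp only [mem_centralizer_iff, SetLike.le_def, SetLike.mem_coe, Set.mem_singleton_iff,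
    forall_eq]
  exact forall₂_congr fun _ _ => eq_comm

theorem mem_centralizer_singleton_comm {g k : G} :
    k ∈ centralizer {g} ↔ g ∈ centralizer {k} := by
  simp only [mem_centralizer_singleton_iff, eq_comm]

theorem _root_.Commute.centralizer_mul_le_left {w g : G} (hwg : Commute w g) {a b : ℕ}
    (hab : a.Coprime b) (hw : w ^ a = 1) (hg : g ^ b = 1) :
    centralizer {w * g} ≤ centralizer {w} := by
  intro c hc
  rw [mem_centralizer_singleton_comm] at hc ⊢
  refine mem_of_pow_mem_of_coprime hab (hw ▸ one_mem _) ?_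
  rw [← mul_one (w ^ b), ← hg, ← hwg.mul_pow]
  exact pow_mem hc b

theorem card_eq_card_center_add_sum_ncard_fiber [Finite G] (S : Finset (Subgroup G))
    (hS : (S : Set (Subgroup G)) = centSet G \ {⊤}) :
    Nat.card G = Nat.card (center G) +
      ∑ C ∈ S, {y : G | y ∉ center G ∧ centralizer {y} = C}.ncard := by
  classical
  have := Fintype.ofFinite G
  have hmaps : Set.MapsTo (fun y : G => centralizer {y})
      (Finset.univ.filter (· ∉ center G) : Set G) S := by
    intro y hy
    rw [hS]
    simp only [Finset.coe_filter, Finset.mem_univ, true_and, Set.mem_ofPred_eq] at hy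
    exact ⟨⟨y, rfl⟩, fun h => hy (centralizer_singleton_eq_top_iff.mp h)⟩
  rw [Nat.card_eq_fintype_card, ← Finset.card_univ,
    ← Finset.card_filter_add_card_filter_not (p := (· ∈ center G)),
    Finset.card_eq_sum_card_fiberwise hmaps]
  congr 1
  · rw [Nat.card_eq_fintype_card, Fintype.card_subtype]
  · refine Finset.sum_congr rfl fun C _ => ?_
    rw [← Set.ncard_coe_finset]
    simp

end Subgroup

def IsConjugateType (G : Type*) [Group G] (m : ℕ) : Prop :=
  ∀ x : G, x ∉ center G → (centralizer {x}).index = m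

namespace IsConjugateType

variable {G : Type*} [Group G] {m p : ℕ} {x y : G}

theorem prime_dvd_index_center (hG : IsConjugateType G m) (hpm : p ∣ m) (hx : x ∉ center G) :
    p ∣ (center G).index := by
  rw [← relIndex_mul_index (center_le_centralizer {x}), hG x hx]
  exact Dvd.dvd.mul_left hpm _

variable [Finite G]

theorem ne_zero (hG : IsConjugateType G m) (hx : x ∉ center G) : m ≠ 0 :=
  hG x hx ▸ index_ne_zero_of_finite

theorem centralizer_eq_of_le (hG : IsConjugateType G m) (hx : x ∉ center G)
    (hy : y ∉ center G) (hle : centralizer {x} ≤ centralizer {y}) :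
    centralizer {x} = centralizer {y} := by
  refine le_antisymm hle (relIndex_eq_one.mp ?_)
  have h := relIndex_mul_index hle
  rw [hG x hx, hG y hy] at h
  exact (Nat.mul_eq_right (hG.ne_zero hx)).mp h

theorem relIndex_center_eq (hG : IsConjugateType G m) (hx : x ∉ center G)
    (hy : y ∉ center G) :
    (center G).relIndex (centralizer {x}) = (center G).relIndex (centralizer {y}) := by
  have hx' := relIndex_mul_index (center_le_centralizer {x})
  have hy' := relIndex_mul_index (center_le_centralizer {y})
  rw [hG x hx] at hx'
  rw [hG y hy, ← hx'] at hy'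
  exact (Nat.eq_of_mul_eq_mul_right (Nat.pos_of_ne_zero (hG.ne_zero hx)) hy').symm

theorem prime_dvd_relIndex_center (hG : IsConjugateType G m) (hp : p.Prime) (hpm : p ∣ m)
    (hx : x ∉ center G) : p ∣ (center G).relIndex (centralizer {x}) := by
  obtain ⟨g, -, hgZ, j, hg⟩ := exists_prime_pow_eq_one_of_prime_dvd_relIndex hp
    ((relIndex_top_right (center G)).symm ▸ hG.prime_dvd_index_center hpm hx)
  rw [hG.relIndex_center_eq hx hgZ]
  exact prime_dvd_relIndex_of_pow_mem hp (mem_centralizer_singleton_iff.mpr rfl) hgZ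
    (hg ▸ one_mem _)

theorem exists_prime_pow_eq_one_centralizer_eq (hG : IsConjugateType G m) (hp : p.Prime)
    (hpm : p ∣ m) (hx : x ∉ center G) :
    ∃ g : G, g ∉ center G ∧ (∃ j, g ^ p ^ j = 1) ∧ centralizer {g} = centralizer {x} := by
  set s := (orderOf x).factorization p
  set u := ordCompl[p] (orderOf x)
  have hup : u.Coprime p := (Nat.coprime_ordCompl hp (orderOf_pos x).ne').symm
  have hpart : (x ^ u) ^ p ^ s = 1 := by
    rw [← pow_mul, mul_comm, Nat.ordProj_mul_ordCompl_eq_self, pow_orderOf_eq_one]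
  by_cases hpartZ : x ^ u ∈ center G
  swap
  · exact ⟨x ^ u, hpartZ, ⟨s, hpart⟩,
      (hG.centralizer_eq_of_le hx hpartZ (centralizer_le_centralizer_pow x u)).symm⟩
  set w := x ^ p ^ s
  have hw : w ^ u = 1 := by
    rw [← pow_mul, Nat.ordProj_mul_ordCompl_eq_self, pow_orderOf_eq_one]
  have hwZ : w ∉ center G := fun h => hx (mem_of_pow_mem_of_coprime (hup.pow_right s) hpartZ h)
  have hxw := hG.centralizer_eq_of_le hx hwZ (centralizer_le_centralizer_pow x _)
  obtain ⟨g, hgw, hgZ, j, hg⟩ := exists_prime_pow_eq_one_of_prime_dvd_relIndex hp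
    (hG.prime_dvd_relIndex_center hp hpm hwZ)
  have hwg : Commute w g := (mem_centralizer_singleton_iff.mp hgw).symm
  have hcop : u.Coprime (p ^ j) := hup.pow_right j
  have hw_le : centralizer {w * g} ≤ centralizer {w} := hwg.centralizer_mul_le_left hcop hw hg
  have hg_le : centralizer {w * g} ≤ centralizer {g} := by
    rw [hwg.eq]
    exact hwg.symm.centralizer_mul_le_left hcop.symm hg hw
  have hwgZ : w * g ∉ center G := fun h => hgZ <| centralizer_singleton_eq_top_iff.mp <|
    top_le_iff.mp (centralizer_singleton_eq_top_iff.mpr h ▸ hg_le)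
  exact ⟨g, hgZ, ⟨j, hg⟩, (hG.centralizer_eq_of_le hwgZ hgZ hg_le).symm.trans
    ((hG.centralizer_eq_of_le hwgZ hwZ hw_le).trans hxw.symm)⟩

theorem mem_centralizer_centralizer_iff (hG : IsConjugateType G m) (hx : x ∉ center G)
    (hy : y ∉ center G) :
    y ∈ centralizer (centralizer {x} : Set G) ↔ centralizer {y} = centralizer {x} := by
  rw [mem_centralizer_iff_le_centralizer_singleton]
  exact ⟨fun h => (hG.centralizer_eq_of_le hx hy h).symm, fun h => h.ge⟩

theorem card_centralizer_centralizer (hG : IsConjugateType G m) (hx : x ∉ center G) :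
    Nat.card (centralizer (centralizer {x} : Set G)) =
      {y : G | y ∉ center G ∧ centralizer {y} = centralizer {x}}.ncard +
        Nat.card (center G) := by
  have hsplit : (centralizer (centralizer {x} : Set G) : Set G) =
      {y : G | y ∉ center G ∧ centralizer {y} = centralizer {x}} ∪ center G := by
    ext y
    by_cases hy : y ∈ center G
    · simp [hy, center_le_centralizer _ hy]
    · simp [hy, ← hG.mem_centralizer_centralizer_iff hx hy]
  rw [← SetLike.coe_sort_coe, Nat.card_coe_set_eq, hsplit,
    Set.ncard_union_eq (Set.disjoint_left.mpr fun _ hy => hy.1), ← Nat.card_coe_set_eq]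
  rfl

theorem prime_mul_card_center_dvd (hG : IsConjugateType G m) (hp : p.Prime) (hpm : p ∣ m)
    (hx : x ∉ center G) :
    p * Nat.card (center G) ∣ Nat.card (centralizer (centralizer {x} : Set G)) := by
  obtain ⟨g, hgZ, ⟨j, hg⟩, hgx⟩ := hG.exists_prime_pow_eq_one_centralizer_eq hp hpm hx
  have hp_dvd := prime_dvd_relIndex_of_pow_mem hp
    ((hG.mem_centralizer_centralizer_iff hx hgZ).mpr hgx) hgZ (hg ▸ one_mem _)
  have hcard := relIndex_mul_relIndex ⊥ _ _ bot_le
    (center_le_centralizer (centralizer {x} : Set G))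
  rw [relIndex_bot_left, relIndex_bot_left] at hcard
  rw [← hcard, mul_comm p]
  exact mul_dvd_mul_left _ hp_dvd

theorem sum_card_centralizer_eq (hG : IsConjugateType G m) (S : Finset (Subgroup G))
    (hS : (S : Set (Subgroup G)) = centSet G \ {⊤}) :
    ∑ C ∈ S, Nat.card (centralizer (C : Set G)) + Nat.card (center G) =
      Nat.card G + S.card * Nat.card (center G) := by
  have hfiber : ∀ C ∈ S, Nat.card (centralizer (C : Set G)) =
      {y : G | y ∉ center G ∧ centralizer {y} = C}.ncard + Nat.card (center G) := by
    intro C hC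
    obtain ⟨⟨x, rfl⟩, hx⟩ := hS ▸ Finset.mem_coe.mpr hC
    exact hG.card_centralizer_centralizer (mt centralizer_singleton_eq_top_iff.mpr hx)
  rw [Finset.sum_congr rfl hfiber, Finset.sum_add_distrib, Finset.sum_const, smul_eq_mul,
    card_eq_card_center_add_sum_ncard_fiber S hS]
  ring

theorem prime_dvd_ncard_centSet_sub_two (hG : IsConjugateType G m) (hp : p.Prime)
    (hpm : p ∣ m) : p ∣ (centSet G).ncard - 2 := by
  set S := (Set.toFinite (centSet G \ {⊤})).toFinset
  have hS : (S : Set (Subgroup G)) = centSet G \ {⊤} := Set.Finite.coe_toFinset _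
  have htop : ⊤ ∈ centSet G := ⟨1, centralizer_singleton_eq_top_iff.mpr (one_mem _)⟩
  rw [← Set.ncard_sdiff_singleton_add_one htop (Set.toFinite _), ← hS, Set.ncard_coe_finset,
    Nat.add_sub_add_right]
  obtain hSe | ⟨C, hC⟩ := S.eq_empty_or_nonempty
  · simp [hSe]
  have hproper : ∀ C ∈ S, ∃ x ∉ center G, centralizer {x} = C := fun C hC => by
    obtain ⟨⟨x, rfl⟩, hx⟩ := hS ▸ Finset.mem_coe.mpr hC
    exact ⟨x, mt centralizer_singleton_eq_top_iff.mpr hx, rfl⟩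
  obtain ⟨x, hx, -⟩ := hproper C hC
  have hdvd_card : p * Nat.card (center G) ∣ Nat.card G := by
    rw [← card_mul_index (center G), mul_comm p]
    exact mul_dvd_mul_left _ (hG.prime_dvd_index_center hpm hx)
  have hdvd_sum : p * Nat.card (center G) ∣ ∑ C ∈ S, Nat.card (centralizer (C : Set G)) :=
    Finset.dvd_sum fun C hC => by
      obtain ⟨y, hy, rfl⟩ := hproper C hC
      exact hG.prime_mul_card_center_dvd hp hpm hy
  have hsum : ∑ C ∈ S, Nat.card (centralizer (C : Set G)) =
      Nat.card G + (S.card - 1) * Nat.card (center G) := by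
    have hcount := hG.sum_card_centralizer_eq S hS
    have hZ_le : Nat.card (center G) ≤ S.card * Nat.card (center G) :=
      Nat.le_mul_of_pos_left _ (Finset.card_pos.mpr ⟨C, hC⟩)
    rw [Nat.sub_one_mul]
    omega
  rw [hsum] at hdvd_sum
  exact Nat.dvd_of_mul_dvd_mul_right Nat.card_pos ((Nat.dvd_add_right hdvd_card).mp hdvd_sum)

end IsConjugateType

theorem stmt7_general (G : Type*) [Group G] [Finite G]
    (n m p k : ℕ) (hp : p.Prime) (hk : 1 ≤ k)
    (hm : m = p ^ k)
    (htype : ∀ x : G, x ∉ Subgroup.center G → (Subgroup.centralizer {x}).index = m)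
    (hcard : (centSet G).ncard = n) :
    p ∣ (n - 2) :=
  hcard ▸ IsConjugateType.prime_dvd_ncard_centSet_sub_two htype hp
    (hm ▸ dvd_pow_self p (Nat.one_le_iff_ne_zero.mp hk))

/-- For a non-abelian finite `n`-centralizer group of conjugate type `(m, 1)` with
`m = p^k` (`p` prime, `k ≥ 1`), `p` divides `n - 2`. -/
theorem stmt7 (G : Type*) [Group G] [Finite G]
    (hG : ¬∀ a b : G, a * b = b * a) (n m p k : ℕ) (hp : p.Prime) (hk : 1 ≤ k)
    (hm : m = p ^ k)
    (htype : ∀ x : G, x ∉ Subgroup.center G → (Subgroup.centralizer {x}).index = m)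
    (hcard : (centSet G).ncard = n) :
    p ∣ (n - 2) :=
  stmt7_general G n m p k hp hk hm htype hcard
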